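/- Let K be a σ-AGSP with target space Z ⊆ H, and suppose V ⊆ H has overlap at least μ onto Z with μ ≥ σ. Then V' = K(V) has overlap at least 1/2 onto Z. -/

import Mathlib

noncomputable section
open scoped Classical

open ContinuousLinearMap

variable {H : Type} [NormedAddCommGroup H] [InnerProductSpace ℂ H] [FiniteDimensional ℂ H]

/-- The orthogonal projection onto the subspace `V`, as an endomorphism of `H`. -/
def Pj (V : Submodule ℂ H) : H →L[ℂ] H := V.subtypeL.comp (Submodule.orthogonalProjectionOnto V)

/-- The overlap `μ(V → Z)` of `V` onto `Z`: the minimum of `⟨z, P_V z⟩` over unit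
vectors `z ∈ Z` (by convention `1` if `Z = 0`). -/
def ovl (V Z : Submodule ℂ H) : ℝ :=
  if Z = ⊥ then 1
  else sInf {x : ℝ | ∃ z ∈ Z, ‖z‖ = 1 ∧ x = ((inner ℂ z (Pj V z) : ℂ)).re}

/-- `V` covers `Z`: the orthogonal projection onto `Z` maps `V` onto all of `Z`. -/
def Covers (V Z : Submodule ℂ H) : Prop := Submodule.map (Pj Z : H →ₗ[ℂ] H) V = Z

/-- The error ratio `Δ = δ/μ = tan²θ` of `V` onto `Z`. -/
def errRatio (V Z : Submodule ℂ H) : ℝ := (1 - ovl V Z) / ovl V Z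

/-- A `σ`-AGSP for target space `Z`: commutes with `P_Z`, is a dilation on `Z`
(`P_Z K† K P_Z ≥ P_Z`), and satisfies `‖K P_{Z⊥}‖ ≤ √σ`. -/
def IsAGSP (σ : ℝ) (K : H →L[ℂ] H) (Z : Submodule ℂ H) : Prop :=
  K.comp (Pj Z) = (Pj Z).comp K ∧
  ((Pj Z).comp ((adjoint K).comp (K.comp (Pj Z))) - Pj Z).IsPositive ∧
  ‖K.comp (Pj Zᗮ)‖ ≤ Real.sqrt σ

set_option maxHeartbeats 2000000

lemma Pj_eq (V : Submodule ℂ H) (x : H) : Pj V x = (Submodule.orthogonalProjectionOnto V x : H) := rfl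

lemma Pj_mem (V : Submodule ℂ H) (x : H) : Pj V x ∈ V := (Submodule.orthogonalProjectionOnto V x).2

lemma Pj_of_mem {V : Submodule ℂ H} {x : H} (h : x ∈ V) : Pj V x = x :=
  V.starProjection_eq_self_iff.mpr h

lemma inner_Pj_left (V : Submodule ℂ H) (x y : H) :
    (inner ℂ (Pj V x) y : ℂ) = inner ℂ x (Pj V y) :=
  Submodule.inner_starProjection_left_eq_right V x y

lemma sub_Pj_mem (V : Submodule ℂ H) (x : H) : x - Pj V x ∈ Vᗮ :=
  V.sub_starProjection_mem_orthogonal x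

lemma inner_Pj_self (V : Submodule ℂ H) (z : H) :
    (inner ℂ z (Pj V z) : ℂ) = (‖Pj V z‖ : ℂ) ^ 2 := by
  have h0 : (inner ℂ (z - Pj V z) (Pj V z) : ℂ) = 0 :=
    Submodule.inner_left_of_mem_orthogonal (Pj_mem V z) (sub_Pj_mem V z)
  have h1 : (inner ℂ z (Pj V z) : ℂ)
      = inner ℂ (z - Pj V z) (Pj V z) + inner ℂ (Pj V z) (Pj V z) := by
    rw [← inner_add_left, sub_add_cancel]
  rw [h1, h0, zero_add, inner_self_eq_norm_sq_to_K]
  norm_cast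

lemma re_inner_Pj (V : Submodule ℂ H) (z : H) :
    ((inner ℂ z (Pj V z) : ℂ)).re = ‖Pj V z‖ ^ 2 := by
  rw [inner_Pj_self, ← Complex.ofReal_pow, Complex.ofReal_re]

lemma abs_inner_le (W : Submodule ℂ H) {w : H} (hw : w ∈ W) (z : H) :
    ‖(inner ℂ w z : ℂ)‖ ≤ ‖w‖ * ‖Pj W z‖ := by
  have h0 : (inner ℂ w (z - Pj W z) : ℂ) = 0 :=
    Submodule.inner_right_of_mem_orthogonal hw (sub_Pj_mem W z)
  have h1 : (inner ℂ w z : ℂ) = inner ℂ w (Pj W z) := by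
    have h := inner_sub_right (𝕜 := ℂ) w z (Pj W z)
    rw [h0] at h
    exact sub_eq_zero.mp h.symm
  rw [h1]
  exact norm_inner_le_norm w _

lemma ovl_bound {V Z : Submodule ℂ H} {μ : ℝ} (hZ : Z ≠ ⊥) (hover : μ ≤ ovl V Z)
    {z : H} (hz : z ∈ Z) : μ * ‖z‖ ^ 2 ≤ ‖Pj V z‖ ^ 2 := by
  rcases eq_or_ne z 0 with rfl | hz0
  · simp
  · have hn : (0 : ℝ) < ‖z‖ := norm_pos_iff.mpr hz0
    set z' := ((‖z‖ : ℂ))⁻¹ • z with hz'def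
    have hz' : z' ∈ Z := Z.smul_mem _ hz
    have hnz' : ‖z'‖ = 1 := by
      rw [hz'def, norm_smul]
      simp [hn.ne']
    have hbdd : BddBelow {x : ℝ | ∃ z ∈ Z, ‖z‖ = 1 ∧ x = ((inner ℂ z (Pj V z) : ℂ)).re} := by
      refine ⟨0, ?_⟩
      rintro x ⟨y, _, _, rfl⟩
      rw [re_inner_Pj]
      positivity
    have hmem : ((inner ℂ z' (Pj V z') : ℂ)).re
        ∈ {x : ℝ | ∃ z ∈ Z, ‖z‖ = 1 ∧ x = ((inner ℂ z (Pj V z) : ℂ)).re} :=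
      ⟨z', hz', hnz', rfl⟩
    have hμ : μ ≤ ((inner ℂ z' (Pj V z') : ℂ)).re := by
      rw [ovl, if_neg hZ] at hover
      exact le_trans hover (csInf_le hbdd hmem)
    rw [re_inner_Pj] at hμ
    have hP : ‖Pj V z'‖ = ‖z‖⁻¹ * ‖Pj V z‖ := by
      rw [hz'def, map_smul, norm_smul]
      simp
    rw [hP, mul_pow, inv_pow] at hμ
    have h2 : ‖z‖ ^ 2 * μ ≤ ‖z‖ ^ 2 * ((‖z‖ ^ 2)⁻¹ * ‖Pj V z‖ ^ 2) :=
      mul_le_mul_of_nonneg_left hμ (by positivity)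
    rw [← mul_assoc, mul_inv_cancel₀ (by positivity : (‖z‖ ^ 2) ≠ 0), one_mul] at h2
    linarith

lemma dilate {σ : ℝ} {K : H →L[ℂ] H} {Z : Submodule ℂ H} (hK : IsAGSP σ K Z)
    {x : H} (hx : x ∈ Z) : ‖x‖ ^ 2 ≤ ‖K x‖ ^ 2 := by
  have h := hK.2.1.2 x
  rw [reApplyInnerSelf_apply] at h
  simp only [sub_apply, comp_apply] at h
  rw [Pj_of_mem hx] at h
  have e1 : (inner ℂ (Pj Z ((adjoint K) (K x))) x : ℂ) = inner ℂ (K x) (K x) := by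
    rw [inner_Pj_left, Pj_of_mem hx, adjoint_inner_left]
  rw [inner_sub_left, e1, inner_self_eq_norm_sq_to_K, inner_self_eq_norm_sq_to_K] at h
  have h' : (0 : ℝ) ≤ ‖K x‖ ^ 2 - ‖x‖ ^ 2 := by
    simpa [← Complex.ofReal_pow, RCLike.re_to_complex] using h
  linarith

lemma K_mem {σ : ℝ} {K : H →L[ℂ] H} {Z : Submodule ℂ H} (hK : IsAGSP σ K Z)
    {x : H} (hx : x ∈ Z) : K x ∈ Z := by
  have h1 := hK.1
  have : K (Pj Z x) = Pj Z (K x) := by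
    have := congrArg (fun (T : H →L[ℂ] H) => T x) h1
    simpa [comp_apply] using this
  rw [Pj_of_mem hx] at this
  rw [this]
  exact Pj_mem Z _

lemma exists_preimage_K {σ : ℝ} {K : H →L[ℂ] H} {Z : Submodule ℂ H} (hK : IsAGSP σ K Z)
    {z : H} (hz : z ∈ Z) : ∃ u ∈ Z, K u = z := by
  let f : Z →ₗ[ℂ] Z :=
    LinearMap.codRestrict Z ((K : H →ₗ[ℂ] H).comp Z.subtype) (fun x => K_mem hK x.2)
  have hker : ∀ x : Z, f x = 0 → x = 0 := by
    intro x hx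
    have hKx : K (x : H) = 0 := congrArg Subtype.val hx
    have hd := dilate hK x.2
    rw [hKx] at hd
    simp only [norm_zero] at hd
    have : ‖(x : H)‖ = 0 := by nlinarith [norm_nonneg (x : H)]
    exact Subtype.ext (norm_eq_zero.mp this)
  have hinj : Function.Injective f := by
    rw [← LinearMap.ker_eq_bot]
    exact (Submodule.eq_bot_iff _).mpr (fun x hx => hker x (LinearMap.mem_ker.mp hx))
  obtain ⟨u, hu⟩ := LinearMap.injective_iff_surjective.mp hinj ⟨z, hz⟩
  exact ⟨u, u.2, congrArg Subtype.val hu⟩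

lemma exists_preimage_T {V Z : Submodule ℂ H} {μ : ℝ} (hZ : Z ≠ ⊥) (hμpos : 0 < μ)
    (hover : μ ≤ ovl V Z) {u : H} (hu : u ∈ Z) : ∃ y ∈ Z, Pj Z (Pj V y) = u := by
  let f : Z →ₗ[ℂ] Z :=
    LinearMap.codRestrict Z (((Pj Z).comp (Pj V) : H →ₗ[ℂ] H).comp Z.subtype)
      (fun x => Pj_mem Z _)
  have hker : ∀ x : Z, f x = 0 → x = 0 := by
    intro x hx
    have hPx : Pj Z (Pj V (x : H)) = 0 := congrArg Subtype.val hx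
    have e1 : (inner ℂ (x : H) (Pj V (x : H)) : ℂ) = 0 := by
      have : (inner ℂ (Pj Z (x : H)) (Pj V (x : H)) : ℂ)
          = inner ℂ (x : H) (Pj Z (Pj V (x : H))) := inner_Pj_left Z _ _
      rw [Pj_of_mem x.2, hPx, inner_zero_right] at this
      exact this
    have e2 := re_inner_Pj V (x : H)
    rw [e1] at e2
    simp only [Complex.zero_re] at e2
    have hb := ovl_bound hZ hover x.2
    rw [← e2] at hb
    have hx2 : ‖(x : H)‖ ^ 2 ≤ 0 := by
      have h5 := (mul_le_mul_iff_right₀ hμpos).mp (by linarith : μ * ‖(x : H)‖ ^ 2 ≤ μ * 0)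
      linarith
    have : ‖(x : H)‖ = 0 := by nlinarith [norm_nonneg (x : H)]
    exact Subtype.ext (norm_eq_zero.mp this)
  have hinj : Function.Injective f := by
    rw [← LinearMap.ker_eq_bot]
    exact (Submodule.eq_bot_iff _).mpr (fun x hx => hker x (LinearMap.mem_ker.mp hx))
  obtain ⟨y, hy⟩ := LinearMap.injective_iff_surjective.mp hinj ⟨u, hu⟩
  refine ⟨y, y.2, ?_⟩
  have := congrArg Subtype.val hy
  exact this

/-- If `V` has overlap at least `μ` onto `Z` with `μ ≥ σ`, then `V' = K(V)` has
overlap at least `1/2` onto `Z`. -/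
theorem overlap_boost (σ : ℝ) (K : H →L[ℂ] H) (Z V : Submodule ℂ H) (μ : ℝ)
    (hK : IsAGSP σ K Z) (hμpos : 0 < μ) (hover : μ ≤ ovl V Z) (hσμ : σ ≤ μ) :
    (1 : ℝ) / 2 ≤ ovl (Submodule.map (K : H →ₗ[ℂ] H) V) Z := by
  by_cases hZ : Z = ⊥
  · rw [ovl, if_pos hZ]; norm_num
  rw [ovl, if_neg hZ]
  have hex : ∃ z ∈ Z, ‖z‖ = (1 : ℝ) := by
    obtain ⟨x, hxZ, hx0⟩ := Submodule.exists_mem_ne_zero_of_ne_bot hZ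
    have hn : (0 : ℝ) < ‖x‖ := norm_pos_iff.mpr hx0
    refine ⟨((‖x‖ : ℂ))⁻¹ • x, Z.smul_mem _ hxZ, ?_⟩
    rw [norm_smul]
    simp [hn.ne']
  obtain ⟨z₀, hz₀Z, hz₀⟩ := hex
  apply le_csInf
  · exact ⟨_, z₀, hz₀Z, hz₀, rfl⟩
  rintro x ⟨z, hzZ, hz1, rfl⟩
  rw [re_inner_Pj]
  -- pick u ∈ Z with K u = z
  obtain ⟨u, huZ, hKu⟩ := exists_preimage_K hK hzZ
  have hu1 : ‖u‖ ≤ 1 := by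
    have := dilate hK huZ
    rw [hKu, hz1] at this
    nlinarith [norm_nonneg u]
  -- pick y ∈ Z with P_Z P_V y = u, set v = P_V y ∈ V
  obtain ⟨y, hyZ, hPy⟩ := exists_preimage_T hZ hμpos hover huZ
  set v := Pj V y with hvdef
  have hvV : v ∈ V := Pj_mem V y
  -- ‖v‖² = re⟪y,u⟫ ≤ ‖y‖‖u‖
  have hv2 : ‖v‖ ^ 2 ≤ ‖y‖ * ‖u‖ := by
    have e1 := re_inner_Pj V y
    have e2 : (inner ℂ y v : ℂ) = inner ℂ y u := by
      have h := inner_Pj_left Z y v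
      rw [Pj_of_mem hyZ, hPy] at h
      exact h
    rw [e2] at e1
    rw [← e1]
    have h6 := re_inner_le_norm (𝕜 := ℂ) y u
    rwa [RCLike.re_to_complex] at h6
  have hμy : μ * ‖y‖ ^ 2 ≤ ‖v‖ ^ 2 := ovl_bound hZ hover hyZ
  -- b = v - u ∈ Zᗮ
  set b := v - u with hbdef
  have hbZ' : b ∈ Zᗮ := by
    have := sub_Pj_mem Z v
    rwa [hPy] at this
  have hpyth : ‖v‖ ^ 2 = ‖u‖ ^ 2 + ‖b‖ ^ 2 := by
    have hv_eq : v = u + b := by rw [hbdef]; abel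
    have hub : (inner ℂ u b : ℂ) = 0 := Submodule.inner_right_of_mem_orthogonal huZ hbZ'
    rw [hv_eq, @norm_add_sq ℂ, hub]
    simp
  -- ‖Kb‖² ≤ μ‖b‖²
  have hKb2 : ‖K b‖ ^ 2 ≤ μ * ‖b‖ ^ 2 := by
    have hKb_eq : K b = (K.comp (Pj Zᗮ)) b := by
      rw [comp_apply, Pj_of_mem hbZ']
    have h1 : ‖K b‖ ≤ Real.sqrt μ * ‖b‖ := by
      calc ‖K b‖ = ‖(K.comp (Pj Zᗮ)) b‖ := by rw [hKb_eq]
        _ ≤ ‖K.comp (Pj Zᗮ)‖ * ‖b‖ := le_opNorm _ _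
        _ ≤ Real.sqrt σ * ‖b‖ := mul_le_mul_of_nonneg_right hK.2.2 (norm_nonneg b)
        _ ≤ Real.sqrt μ * ‖b‖ :=
            mul_le_mul_of_nonneg_right (Real.sqrt_le_sqrt hσμ) (norm_nonneg b)
    nlinarith [Real.sq_sqrt hμpos.le, Real.sqrt_nonneg μ, norm_nonneg (K b), norm_nonneg b]
  have hKb1 : ‖K b‖ ^ 2 ≤ 1 := by
    have hyu : μ * ‖y‖ ^ 2 ≤ ‖y‖ * ‖u‖ := le_trans hμy hv2
    have hkey : μ * ‖v‖ ^ 2 ≤ ‖u‖ ^ 2 := by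
      rcases eq_or_lt_of_le (norm_nonneg y) with h0 | h0
      · have hv0 : ‖v‖ ^ 2 ≤ 0 := by nlinarith
        nlinarith [sq_nonneg ‖u‖]
      · have h1 : μ * ‖y‖ ≤ ‖u‖ := by nlinarith
        nlinarith [mul_le_mul_of_nonneg_left hv2 hμpos.le,
          mul_le_mul_of_nonneg_right h1 (norm_nonneg u)]
    nlinarith [mul_nonneg hμpos.le (sq_nonneg ‖u‖), norm_nonneg u]
  -- w = K v = z + K b
  set w := K v with hwdef
  have hwW : w ∈ Submodule.map (K : H →ₗ[ℂ] H) V := ⟨v, hvV, rfl⟩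
  have hKbZ' : K b ∈ Zᗮ := by
    have hPjb : Pj Z b = 0 := by
      rw [Pj_eq, Submodule.orthogonalProjectionOnto_apply_of_mem_orthogonal hbZ']
      simp
    have hcomm : K (Pj Z b) = Pj Z (K b) := by
      have := congrArg (fun (T : H →L[ℂ] H) => T b) hK.1
      simpa [comp_apply] using this
    rw [hPjb, map_zero] at hcomm
    have := sub_Pj_mem Z (K b)
    rwa [← hcomm, sub_zero] at this
  have hwdec : w = z + K b := by
    have hv_eq : v = u + b := by rw [hbdef]; abel
    rw [hwdef, hv_eq, map_add, hKu]
  have hinner_zw : (inner ℂ z w : ℂ) = 1 := by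
    rw [hwdec, inner_add_right, Submodule.inner_right_of_mem_orthogonal hzZ hKbZ',
      add_zero, inner_self_eq_norm_sq_to_K, hz1]
    norm_num
  have hw2 : ‖w‖ ^ 2 ≤ 2 := by
    have hzKb : (inner ℂ z (K b) : ℂ) = 0 :=
      Submodule.inner_right_of_mem_orthogonal hzZ hKbZ'
    have := @norm_add_sq ℂ _ _ _ _ z (K b)
    rw [hzKb] at this
    simp only [map_zero, mul_zero, add_zero] at this
    rw [hwdec, this, hz1]
    nlinarith
  have htest : (1 : ℝ) ≤ ‖w‖ * ‖Pj (Submodule.map (K : H →ₗ[ℂ] H) V) z‖ := by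
    have hab := abs_inner_le (Submodule.map (K : H →ₗ[ℂ] H) V) hwW z
    have h1 : (inner ℂ w z : ℂ) = 1 := by
      rw [← inner_conj_symm, hinner_zw]
      simp
    rw [h1] at hab
    simpa using hab
  nlinarith [norm_nonneg w, norm_nonneg (Pj (Submodule.map (K : H →ₗ[ℂ] H) V) z)]
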